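/- arXiv:math/0604127 — 5 statements merged into one kernel-verified Lean document; each statement's English description precedes it below -/
import Mathlib

section
/- Let R, Y, ξ be independent random variables with R taking values in [0,1], ξ standard Gaussian, and Y Gaussian with mean 0 and variance α². Set Z = σ(√R·Y + α√(1−R)·ξ) with σ > 0. Then Z is Gaussian with mean zero and variance σ²α². -/
/-!
Given `R = r`, the variable `σ (√r Y + α √(1 - r) ξ)` is a linear combination of independent
centred Gaussians, hence Gaussian with variance `σ² (r α² + (1 - r) α²) = σ² α²`. This law does
not depend on `r`, so mixing over the law of `R`, which is independent of `(Y, ξ)`, leaves it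
unchanged.
-/

open MeasureTheory ProbabilityTheory NNReal

lemma MeasureTheory.Measure.map_prod_eq_of_ae_map_eq {β γ δ : Type*} [MeasurableSpace β]
    [MeasurableSpace γ] [MeasurableSpace δ] (μ : Measure β) [IsProbabilityMeasure μ]
    (ν : Measure γ) [SFinite ν] {f : β × γ → δ} (hf : Measurable f) {ρ : Measure δ}
    (h : ∀ᵐ b ∂μ, ν.map (fun c => f (b, c)) = ρ) :
    (μ.prod ν).map f = ρ := by
  ext s hs
  rw [Measure.map_apply hf hs, Measure.prod_apply (hf hs)]
  have hsection : ∀ᵐ b ∂μ, ν (Prod.mk b ⁻¹' (f ⁻¹' s)) = ρ s := h.mono fun b hb => by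
    rw [← hb, Measure.map_apply (by fun_prop) hs]
    rfl
  rw [lintegral_congr_ae hsection, lintegral_const, measure_univ, mul_one]

lemma ProbabilityTheory.gaussianReal_prod_map_linear (a b m₁ m₂ : ℝ) (v₁ v₂ : ℝ≥0) :
    ((gaussianReal m₁ v₁).prod (gaussianReal m₂ v₂)).map (fun p : ℝ × ℝ => a * p.1 + b * p.2)
      = gaussianReal (a * m₁ + b * m₂) (⟨a ^ 2, sq_nonneg a⟩ * v₁ + ⟨b ^ 2, sq_nonneg b⟩ * v₂) := by
  have hsplit : (fun p : ℝ × ℝ => a * p.1 + b * p.2)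
      = (fun p : ℝ × ℝ => p.1 + p.2) ∘ Prod.map (a * ·) (b * ·) := rfl
  rw [hsplit, ← Measure.map_map (by fun_prop) (by fun_prop),
    ← Measure.map_prod_map _ _ (by fun_prop) (by fun_prop),
    gaussianReal_map_const_mul, gaussianReal_map_const_mul]
  exact gaussianReal_conv_gaussianReal

lemma gaussianReal_prod_map_sqrt_mix (α σ : ℝ) {r : ℝ} (hr : r ∈ Set.Icc (0 : ℝ) 1) :
    ((gaussianReal 0 ⟨α ^ 2, sq_nonneg α⟩).prod (gaussianReal 0 1)).map
        (fun p : ℝ × ℝ => σ * (Real.sqrt r * p.1 + α * Real.sqrt (1 - r) * p.2))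
      = gaussianReal 0 ⟨σ ^ 2 * α ^ 2, by positivity⟩ := by
  have hlin : (fun p : ℝ × ℝ => σ * (Real.sqrt r * p.1 + α * Real.sqrt (1 - r) * p.2))
      = fun p => (σ * Real.sqrt r) * p.1 + (σ * α * Real.sqrt (1 - r)) * p.2 := by
    funext p; ring
  rw [hlin]
  refine (gaussianReal_prod_map_linear _ _ _ _ _ _).trans ?_
  congr 1
  · simp
  · apply NNReal.coe_injective
    change (σ * √r) ^ 2 * α ^ 2 + (σ * α * √(1 - r)) ^ 2 * 1 = σ ^ 2 * α ^ 2
    rw [mul_pow, mul_pow, mul_pow, Real.sq_sqrt hr.1, Real.sq_sqrt (sub_nonneg.mpr hr.2)]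
    ring

theorem stmt1 {Ω : Type*} [MeasurableSpace Ω] (μ : Measure Ω) [IsProbabilityMeasure μ]
    (R Y ξ : Ω → ℝ) (hR : Measurable R) (hY : Measurable Y) (hξ : Measurable ξ)
    (hind : iIndepFun ![R, Y, ξ] μ)
    (hR01 : ∀ᵐ ω ∂μ, R ω ∈ Set.Icc (0:ℝ) 1)
    (α σ : ℝ)
    (hYlaw : μ.map Y = gaussianReal 0 ⟨α^2, by positivity⟩)
    (hξlaw : μ.map ξ = gaussianReal 0 1) :
    μ.map (fun ω => σ * (Real.sqrt (R ω) * Y ω + α * Real.sqrt (1 - R ω) * ξ ω))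
      = gaussianReal 0 ⟨σ^2 * α^2, by positivity⟩ := by
  have hmeas : ∀ i, Measurable (![R, Y, ξ] i) := by
    intro i; fin_cases i <;> assumption
  have hYξ : μ.map (fun ω => (Y ω, ξ ω)) = (μ.map Y).prod (μ.map ξ) :=
    (indepFun_iff_map_prod_eq_prod_map_map hY.aemeasurable hξ.aemeasurable).mp
      (hind.indepFun (i := 1) (j := 2) (by decide))
  have hRYξ : μ.map (fun ω => (R ω, (Y ω, ξ ω))) = (μ.map R).prod (μ.map (fun ω => (Y ω, ξ ω))) :=
    (indepFun_iff_map_prod_eq_prod_map_map hR.aemeasurable (hY.prodMk hξ).aemeasurable).mp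
      (hind.indepFun_prodMk hmeas 1 2 0 (by decide) (by decide)).symm
  have : IsProbabilityMeasure (μ.map R) := Measure.isProbabilityMeasure_map hR.aemeasurable
  let mix : ℝ × (ℝ × ℝ) → ℝ := fun q =>
    σ * (Real.sqrt q.1 * q.2.1 + α * Real.sqrt (1 - q.1) * q.2.2)
  have hmix : Measurable mix := by fun_prop
  change μ.map (mix ∘ fun ω => (R ω, (Y ω, ξ ω))) = _
  rw [← Measure.map_map hmix (hR.prodMk (hY.prodMk hξ)), hRYξ, hYξ]
  refine (μ.map R).map_prod_eq_of_ae_map_eq _ hmix ?_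
  filter_upwards [(ae_map_iff hR.aemeasurable measurableSet_Icc).mpr hR01] with r hr
  rw [hYlaw, hξlaw]
  exact gaussianReal_prod_map_sqrt_mix α σ hr
end

section
/- Let R, Y, ξ be independent with R ∈ [0,1] a.s., ξ ~ N(0,1), Y ~ N(0,α²), α > 0, σ > 0, and Z = σ(√R·Y + α√(1−R)·ξ). If (Y,Z) is a bivariate Gaussian vector, then R is almost surely constant. -/
/-!
Given `R = r`, the variable `Y + Z = (1 + σ √r) Y + σ α √(1 - r) ξ` is centred Gaussian with
variance `G r = α² (1 + σ²) + 2 α² σ √r`, so the characteristic function of `Y + Z` is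
`t ↦ E[exp (-t² G(R) / 2)]`, a nonnegative real. If `Y + Z ~ N(m, v)` this rules out `m ≠ 0`
(the characteristic function at `π / m` is negative), and then
`E[exp (-t² G(R) / 2)] = exp (-t² v / 2)`.
At `t = 1` and `t = √2` this says that `exp (-G(R) / 2)` has variance zero, so `G(R) = v` a.s.;
since `G` is injective on `[0, 1]`, `R` is a.s. constant.
-/

open MeasureTheory ProbabilityTheory NNReal Complex Set

lemma integral_cexp_mul_add_mul_prod (ν₁ ν₂ : Measure ℝ) [SFinite ν₁] [SFinite ν₂] (a b t : ℝ) :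
    ∫ q : ℝ × ℝ, cexp (↑(t * (a * q.1 + b * q.2)) * I) ∂(ν₁.prod ν₂)
      = charFun ν₁ (t * a) * charFun ν₂ (t * b) := by
  simp_rw [charFun_apply_real, ← integral_prod_mul, ← Complex.exp_add]
  congr with q
  push_cast
  ring_nf

lemma charFun_gaussianReal_zero (v : ℝ≥0) (t : ℝ) :
    charFun (gaussianReal 0 v) t = ↑(Real.exp (-(t ^ 2 * v) / 2)) := by
  rw [charFun_gaussianReal]
  push_cast
  ring_nf

lemma charFun_map_gaussianMixture {Ω S : Type*} [MeasurableSpace Ω] [MeasurableSpace S]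
    {μ : Measure Ω} [IsProbabilityMeasure μ] {R : Ω → S} {Y ξ : Ω → ℝ}
    (hR : Measurable R) (hY : Measurable Y) (hξ : Measurable ξ)
    (hRYξ : IndepFun R (fun ω => (Y ω, ξ ω)) μ) (hYξ : IndepFun Y ξ μ) {v₁ v₂ : ℝ≥0}
    (hYlaw : μ.map Y = gaussianReal 0 v₁) (hξlaw : μ.map ξ = gaussianReal 0 v₂)
    {f g : S → ℝ} (hf : Measurable f) (hg : Measurable g) (t : ℝ) :
    charFun (μ.map fun ω => f (R ω) * Y ω + g (R ω) * ξ ω) t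
      = ↑(∫ ω, Real.exp (-(t ^ 2 * (v₁ * f (R ω) ^ 2 + v₂ * g (R ω) ^ 2)) / 2) ∂μ) := by
  have hlaw : μ.map (fun ω => (R ω, (Y ω, ξ ω)))
      = (μ.map R).prod ((gaussianReal 0 v₁).prod (gaussianReal 0 v₂)) := by
    rw [← hYlaw, ← hξlaw,
      ← (indepFun_iff_map_prod_eq_prod_map_map hY.aemeasurable hξ.aemeasurable).mp hYξ]
    exact (indepFun_iff_map_prod_eq_prod_map_map hR.aemeasurable
      (hY.prodMk hξ).aemeasurable).mp hRYξ
  have hW : (fun ω => f (R ω) * Y ω + g (R ω) * ξ ω)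
      = (fun p : S × ℝ × ℝ => f p.1 * p.2.1 + g p.1 * p.2.2) ∘ fun ω => (R ω, (Y ω, ξ ω)) :=
    rfl
  have : IsProbabilityMeasure (μ.map R) := Measure.isProbabilityMeasure_map hR.aemeasurable
  have hint : Integrable (fun p : S × ℝ × ℝ => cexp (↑(t * (f p.1 * p.2.1 + g p.1 * p.2.2)) * I))
      ((μ.map R).prod ((gaussianReal 0 v₁).prod (gaussianReal 0 v₂))) :=
    (integrable_const (1 : ℂ)).mono (by fun_prop) (ae_of_all _ fun p => by
      simp only [norm_exp_ofReal_mul_I, norm_one, le_refl])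
  calc charFun (μ.map fun ω => f (R ω) * Y ω + g (R ω) * ξ ω) t
      = ∫ p, cexp (↑(t * (f p.1 * p.2.1 + g p.1 * p.2.2)) * I)
          ∂(μ.map R).prod ((gaussianReal 0 v₁).prod (gaussianReal 0 v₂)) := by
        rw [hW, ← Measure.map_map (by fun_prop) (by fun_prop), hlaw, charFun_apply_real,
          integral_map (by fun_prop) (by fun_prop)]
        push_cast
        rfl
    _ = ∫ r, ↑(Real.exp (-(t ^ 2 * (v₁ * f r ^ 2 + v₂ * g r ^ 2)) / 2)) ∂(μ.map R) := by
        rw [integral_prod _ hint]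
        congr with r
        dsimp only
        rw [integral_cexp_mul_add_mul_prod, charFun_gaussianReal_zero, charFun_gaussianReal_zero,
          ← ofReal_mul, ← Real.exp_add]
        ring_nf
    _ = _ := by rw [integral_map hR.aemeasurable (by fun_prop), integral_complex_ofReal]

lemma eq_zero_of_forall_charFun_gaussianReal_re_nonneg {m : ℝ} {v : ℝ≥0}
    (h : ∀ t, 0 ≤ (charFun (gaussianReal m v) t).re) : m = 0 := by
  by_contra hm
  have hπ := h (Real.pi / m)
  have : charFun (gaussianReal m v) (Real.pi / m)
      = -↑(Real.exp (-((Real.pi / m) ^ 2 * v) / 2)) := by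
    rw [charFun_gaussianReal, sub_eq_neg_add, Complex.exp_add]
    push_cast
    rw [div_mul_cancel₀ _ (by exact_mod_cast hm), Complex.exp_pi_mul_I]
    ring_nf
  rw [this, neg_re, ofReal_re] at hπ
  linarith [Real.exp_pos (-((Real.pi / m) ^ 2 * v) / 2)]

lemma ae_eq_const_of_integral_exp_neg_mul_sq {Ω : Type*} [MeasurableSpace Ω] {μ : Measure Ω}
    [IsProbabilityMeasure μ] {S : Ω → ℝ} (hS : AEMeasurable S μ) (hS0 : 0 ≤ᵐ[μ] S) {v : ℝ}
    (h : ∀ t, ∫ ω, Real.exp (-(t ^ 2 * S ω) / 2) ∂μ = Real.exp (-(t ^ 2 * v) / 2)) :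
    S =ᵐ[μ] fun _ => v := by
  set X := fun ω => Real.exp (-S ω / 2)
  have hX : MemLp X 2 μ := by
    refine MemLp.of_bound (by fun_prop) 1 ?_
    filter_upwards [hS0] with ω hω
    simp only [X, Real.norm_eq_abs, Real.abs_exp, Real.exp_le_one_iff]
    linarith [show 0 ≤ S ω from hω]
  have hmean : μ[X] = Real.exp (-v / 2) := by simpa using h 1
  have hsq : μ[X ^ 2] = Real.exp (-v / 2) ^ 2 := by
    have hsq2 : ∀ x, Real.exp (-(√2 ^ 2 * x) / 2) = Real.exp (-x / 2) ^ 2 := fun x => by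
      rw [← Real.exp_nat_mul, Real.sq_sqrt zero_le_two]
      ring_nf
    simpa only [hsq2, Pi.pow_apply] using h √2
  have hvar : Var[X; μ] = 0 := by rw [variance_eq_sub hX, hmean, hsq, sub_self]
  filter_upwards [ae_eq_integral_of_variance_eq_zero hX hvar] with ω hω
  rw [hmean] at hω
  simpa [X] using hω

lemma Set.InjOn.exists_ae_eq_const_of_comp {α β Ω : Type*} [MeasurableSpace Ω] {μ : Measure Ω}
    [NeZero μ] {f : α → β} {s : Set α} (hf : InjOn f s) {R : Ω → α} (hRs : ∀ᵐ ω ∂μ, R ω ∈ s)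
    {b : β} (h : ∀ᵐ ω ∂μ, f (R ω) = b) : ∃ c, R =ᵐ[μ] fun _ => c := by
  obtain ⟨ω₀, hω₀s, hω₀⟩ := (hRs.and h).exists
  refine ⟨R ω₀, ?_⟩
  filter_upwards [hRs, h] with ω hωs hω using hf hωs hω₀s (hω.trans hω₀.symm)

-- The variance of `(1 + σ √r) Y + σ α √(1 - r) ξ`, i.e. of `Y + Z` given `R = r`.
noncomputable def mixtureVariance (α σ r : ℝ) : ℝ :=
  α ^ 2 * (1 + σ * √r) ^ 2 + (σ * α * √(1 - r)) ^ 2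

@[fun_prop]
lemma measurable_mixtureVariance (α σ : ℝ) : Measurable (mixtureVariance α σ) := by
  unfold mixtureVariance
  fun_prop

lemma mixtureVariance_nonneg (α σ r : ℝ) : 0 ≤ mixtureVariance α σ r := by
  unfold mixtureVariance
  positivity

lemma mixtureVariance_of_mem_Icc (α σ : ℝ) {r : ℝ} (hr : r ∈ Icc 0 1) :
    mixtureVariance α σ r = α ^ 2 * (1 + σ ^ 2) + 2 * α ^ 2 * σ * √r := by
  rw [mixtureVariance, mul_pow, Real.sq_sqrt (sub_nonneg.2 hr.2)]
  linear_combination α ^ 2 * σ ^ 2 * Real.sq_sqrt hr.1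

lemma injOn_mixtureVariance {α σ : ℝ} (hα : α ≠ 0) (hσ : σ ≠ 0) :
    InjOn (mixtureVariance α σ) (Icc 0 1) := by
  intro r hr s hs hrs
  rw [mixtureVariance_of_mem_Icc α σ hr, mixtureVariance_of_mem_Icc α σ hs, add_right_inj] at hrs
  exact (Real.sqrt_inj hr.1 hs.1).mp (mul_left_cancel₀ (by positivity) hrs)

theorem stmt3 {Ω : Type*} [MeasurableSpace Ω] (μ : Measure Ω) [IsProbabilityMeasure μ]
    (R Y ξ : Ω → ℝ) (hR : Measurable R) (hY : Measurable Y) (hξ : Measurable ξ)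
    (hind : iIndepFun ![R, Y, ξ] μ)
    (hR01 : ∀ᵐ ω ∂μ, R ω ∈ Set.Icc (0:ℝ) 1)
    (α σ : ℝ) (hα : 0 < α) (hσ : 0 < σ)
    (hYlaw : μ.map Y = gaussianReal 0 ⟨α^2, by positivity⟩)
    (hξlaw : μ.map ξ = gaussianReal 0 1)
    (Z : Ω → ℝ)
    (hZ : Z = fun ω => σ * (Real.sqrt (R ω) * Y ω + α * Real.sqrt (1 - R ω) * ξ ω))
    (hgauss : ∀ a b : ℝ, ∃ (m : ℝ) (v : ℝ≥0),
      μ.map (fun ω => a * Y ω + b * Z ω) = gaussianReal m v) :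
    ∃ c : ℝ, R =ᵐ[μ] fun _ => c := by
  have hmeas : ∀ i, Measurable (![R, Y, ξ] i) := fun i => by fin_cases i <;> assumption
  have hYξ : IndepFun Y ξ μ := by simpa using hind.indepFun (show (1 : Fin 3) ≠ 2 by decide)
  have hRYξ : IndepFun R (fun ω => (Y ω, ξ ω)) μ := by
    simpa using (hind.indepFun_prodMk hmeas 1 2 0 (by decide) (by decide)).symm
  have hsum : (fun ω => 1 * Y ω + 1 * Z ω)
      = fun ω => (1 + σ * √(R ω)) * Y ω + σ * α * √(1 - R ω) * ξ ω := by
    subst hZ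
    ext ω
    ring
  have hcf : ∀ t, charFun (μ.map fun ω => 1 * Y ω + 1 * Z ω) t
      = ↑(∫ ω, Real.exp (-(t ^ 2 * mixtureVariance α σ (R ω)) / 2) ∂μ) := fun t => by
    rw [hsum, charFun_map_gaussianMixture hR hY hξ hRYξ hYξ hYlaw hξlaw
      (f := fun r => 1 + σ * √r) (g := fun r => σ * α * √(1 - r)) (by fun_prop) (by fun_prop) t]
    simp only [mixtureVariance, NNReal.coe_one, one_mul]
    rfl
  obtain ⟨m, v, hmv⟩ := hgauss 1 1
  obtain rfl : m = 0 := eq_zero_of_forall_charFun_gaussianReal_re_nonneg fun t => by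
    rw [← hmv, hcf, ofReal_re]
    exact integral_nonneg fun ω => (Real.exp_pos _).le
  have hG : ∀ᵐ ω ∂μ, mixtureVariance α σ (R ω) = v :=
    ae_eq_const_of_integral_exp_neg_mul_sq (by fun_prop)
      (ae_of_all _ fun ω => mixtureVariance_nonneg α σ (R ω))
      fun t => by exact_mod_cast (hcf t).symm.trans (hmv ▸ charFun_gaussianReal_zero v t)
  exact (injOn_mixtureVariance hα.ne' hσ.ne').exists_ae_eq_const_of_comp hR01 hG
end

section
/- For independent random variables R₁, R₂, ξ₁, ξ₂ with R₁, R₂ ∈ [0,1] a.s., ξ₁, ξ₂ ~ N(0,1), and parameters 0 < s < t < u with σ = √(t/s), τ = √(u/t), α = √s: if X_t = σ(√R₁·X_s + α√(1−R₁)·ξ₁) and X_u = τ(√R₂·X_t + σα√(1−R₂)·ξ₂), then X_u = στ(√(R₁R₂)·X_s + α√(1−R₁R₂)·ξ) where ξ is the standard Gaussian random variable defined in terms of R₁, R₂, ξ₁, ξ₂ as ξ = (√((1−R₁)R₂)/√(1−R₁R₂))1_{R₁R₂<1}ξ₁ + 1_{R₁R₂=1}ξ₁ + (√(1−R₂)/√(1−R₁R₂))1_{R₁R₂<1}ξ₂.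 -/
/-!
Pointwise, `X_u = στ (√(R₁R₂) X_s + α (√((1-R₁)R₂) ξ₁ + √(1-R₂) ξ₂))` by expanding and using
`√R₂ √R₁ = √(R₁R₂)`. On `{R₁R₂ < 1}` the noise term is `√(1-R₁R₂) ξ` by construction of `ξ`;
on `{R₁R₂ = 1}` we have `R₁ = R₂ = 1`, so both noise terms vanish.
-/

open MeasureTheory ProbabilityTheory

noncomputable def combinedNoise (r₁ r₂ a b : ℝ) : ℝ :=
  (if r₁ * r₂ < 1 then Real.sqrt ((1 - r₁) * r₂) / Real.sqrt (1 - r₁ * r₂) else 0) * a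
    + (if r₁ * r₂ = 1 then 1 else 0) * a
    + (if r₁ * r₂ < 1 then Real.sqrt (1 - r₂) / Real.sqrt (1 - r₁ * r₂) else 0) * b

theorem sqrt_one_sub_mul_mul_combinedNoise {r₁ r₂ : ℝ} (h₁ : r₁ ∈ Set.Icc (0 : ℝ) 1)
    (h₂ : r₂ ∈ Set.Icc (0 : ℝ) 1) (a b : ℝ) :
    Real.sqrt (1 - r₁ * r₂) * combinedNoise r₁ r₂ a b
      = Real.sqrt ((1 - r₁) * r₂) * a + Real.sqrt (1 - r₂) * b := by
  obtain ⟨h₁0, h₁1⟩ := h₁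
  obtain ⟨h₂0, h₂1⟩ := h₂
  unfold combinedNoise
  rcases (mul_le_one₀ h₁1 h₂0 h₂1).lt_or_eq with hlt | heq
  · have hpos : 0 < Real.sqrt (1 - r₁ * r₂) := Real.sqrt_pos.mpr (by linarith)
    rw [if_pos hlt, if_neg hlt.ne, if_pos hlt]
    field_simp
    ring
  · have hr₁ : r₁ = 1 := by nlinarith
    have hr₂ : r₂ = 1 := by nlinarith
    simp [hr₁, hr₂]

theorem compose_noisy_scalings {r₁ r₂ : ℝ} (h₂ : 0 ≤ r₂) (σ τ α x a b : ℝ) :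
    τ * (Real.sqrt r₂ * (σ * (Real.sqrt r₁ * x + α * Real.sqrt (1 - r₁) * a))
        + σ * α * Real.sqrt (1 - r₂) * b)
      = σ * τ * (Real.sqrt (r₁ * r₂) * x
        + α * (Real.sqrt ((1 - r₁) * r₂) * a + Real.sqrt (1 - r₂) * b)) := by
  rw [mul_comm r₁, mul_comm (1 - r₁), Real.sqrt_mul h₂, Real.sqrt_mul h₂]
  ring

theorem stmt5_general {Ω : Type*} [MeasurableSpace Ω] (μ : Measure Ω)
    (Xs R₁ R₂ ξ₁ ξ₂ : Ω → ℝ)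
    (hR₁01 : ∀ᵐ ω ∂μ, R₁ ω ∈ Set.Icc (0:ℝ) 1)
    (hR₂01 : ∀ᵐ ω ∂μ, R₂ ω ∈ Set.Icc (0:ℝ) 1)
    (σ τ α : ℝ)
    (Xt Xu ξ : Ω → ℝ)
    (hXt : Xt = fun ω => σ * (Real.sqrt (R₁ ω) * Xs ω + α * Real.sqrt (1 - R₁ ω) * ξ₁ ω))
    (hXu : Xu = fun ω => τ * (Real.sqrt (R₂ ω) * Xt ω + σ * α * Real.sqrt (1 - R₂ ω) * ξ₂ ω))
    (hξ : ξ = fun ω =>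
      (if R₁ ω * R₂ ω < 1 then
          Real.sqrt ((1 - R₁ ω) * R₂ ω) / Real.sqrt (1 - R₁ ω * R₂ ω) else 0) * ξ₁ ω
      + (if R₁ ω * R₂ ω = 1 then 1 else 0) * ξ₁ ω
      + (if R₁ ω * R₂ ω < 1 then
          Real.sqrt (1 - R₂ ω) / Real.sqrt (1 - R₁ ω * R₂ ω) else 0) * ξ₂ ω) :
    ∀ᵐ ω ∂μ, Xu ω = σ * τ * (Real.sqrt (R₁ ω * R₂ ω) * Xs ω
      + α * Real.sqrt (1 - R₁ ω * R₂ ω) * ξ ω) := by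
  have hξ' : ξ = fun ω => combinedNoise (R₁ ω) (R₂ ω) (ξ₁ ω) (ξ₂ ω) := hξ
  subst hXt hXu hξ'
  filter_upwards [hR₁01, hR₂01] with ω h₁ h₂
  rw [compose_noisy_scalings h₂.1, mul_assoc α, sqrt_one_sub_mul_mul_combinedNoise h₁ h₂]

theorem stmt5 {Ω : Type*} [MeasurableSpace Ω] (μ : Measure Ω) [IsProbabilityMeasure μ]
    (Xs R₁ R₂ ξ₁ ξ₂ : Ω → ℝ)
    (hXs : Measurable Xs) (hR₁ : Measurable R₁) (hR₂ : Measurable R₂)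
    (hξ₁ : Measurable ξ₁) (hξ₂ : Measurable ξ₂)
    (hind : iIndepFun ![Xs, R₁, R₂, ξ₁, ξ₂] μ)
    (hR₁01 : ∀ᵐ ω ∂μ, R₁ ω ∈ Set.Icc (0:ℝ) 1)
    (hR₂01 : ∀ᵐ ω ∂μ, R₂ ω ∈ Set.Icc (0:ℝ) 1)
    (hξ₁law : μ.map ξ₁ = gaussianReal 0 1)
    (hξ₂law : μ.map ξ₂ = gaussianReal 0 1)
    (s t u σ τ α : ℝ) (hs : 0 < s) (hst : s < t) (htu : t < u)
    (hσ : σ = Real.sqrt (t / s)) (hτ : τ = Real.sqrt (u / t)) (hα : α = Real.sqrt s)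
    (Xt Xu ξ : Ω → ℝ)
    (hXt : Xt = fun ω => σ * (Real.sqrt (R₁ ω) * Xs ω + α * Real.sqrt (1 - R₁ ω) * ξ₁ ω))
    (hXu : Xu = fun ω => τ * (Real.sqrt (R₂ ω) * Xt ω + σ * α * Real.sqrt (1 - R₂ ω) * ξ₂ ω))
    (hξ : ξ = fun ω =>
      (if R₁ ω * R₂ ω < 1 then
          Real.sqrt ((1 - R₁ ω) * R₂ ω) / Real.sqrt (1 - R₁ ω * R₂ ω) else 0) * ξ₁ ω
      + (if R₁ ω * R₂ ω = 1 then 1 else 0) * ξ₁ ω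
      + (if R₁ ω * R₂ ω < 1 then
          Real.sqrt (1 - R₂ ω) / Real.sqrt (1 - R₁ ω * R₂ ω) else 0) * ξ₂ ω) :
    ∀ᵐ ω ∂μ, Xu ω = σ * τ * (Real.sqrt (R₁ ω * R₂ ω) * Xs ω
      + α * Real.sqrt (1 - R₁ ω * R₂ ω) * ξ ω) :=
  stmt5_general μ Xs R₁ R₂ ξ₁ ξ₂ hR₁01 hR₂01 σ τ α Xt Xu ξ hXt hXu hξ
end

section
/- For integers j, k ≥ 0 and u > 0, e^{−ku/2}(1 − √(1−e^{−u}))^j = ∫₀^∞ e^{−λu} (ε_{k/2} * m^{*j})(dλ), where m = (1/(2√π)) Σ_{n=1}^∞ [Γ(n−1/2)/n!] ε_n and m^{*j} denotes the j-fold convolution of m (with m^{*0} = ε₀). -/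
/-! The Laplace transform `λ ↦ e^(-λu)` turns convolution into multiplication, so everything
reduces to the Laplace transform of `m`. Since `Γ(n + 1/2) = √π (2n)! / (4ⁿ n!)`, the mass of `m`
at `n + 1` is `Cₙ / (2·4ⁿ)`, with `Cₙ` the Catalan numbers, and the transform at `u` is
`S = ∑ Cₙ xⁿ⁺¹ / (2·4ⁿ)` with `x = e^(-u)`. Squaring the series and using the Catalan recursion
gives `S² = 2S - x`, and the bound `S ≤ 1` selects the root `S = 1 - √(1 - x)`. -/

open MeasureTheory Real

noncomputable def mMeas : Measure ℝ :=
  Measure.sum (fun n : ℕ =>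
    (ENNReal.ofReal (Real.Gamma ((n + 1 : ℝ) - 1/2)
      / ((n + 1).factorial * (2 * Real.sqrt π)))) • Measure.dirac ((n : ℝ) + 1))

noncomputable def convPow (μ : Measure ℝ) : ℕ → Measure ℝ
  | 0 => Measure.dirac 0
  | j + 1 => (convPow μ j).conv μ

open Finset
open scoped Nat

noncomputable def catalanWeight (n : ℕ) : ℝ := catalan n / (2 * 4 ^ n)

lemma catalanWeight_nonneg (n : ℕ) : 0 ≤ catalanWeight n := by
  unfold catalanWeight; positivity

lemma centralBinom_succ_eq_catalan (n : ℕ) :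
    ((n + 1).centralBinom : ℝ) = 2 * (2 * n + 1) * catalan n := by
  have hsucc : ((n : ℝ) + 1) * (n + 1).centralBinom = 2 * (2 * n + 1) * n.centralBinom := by
    exact_mod_cast Nat.succ_mul_centralBinom_succ n
  have hcat : ((n : ℝ) + 1) * catalan n = n.centralBinom := by
    exact_mod_cast succ_mul_catalan_eq_centralBinom n
  apply mul_left_cancel₀ (show (n : ℝ) + 1 ≠ 0 by positivity)
  rw [hsucc, ← hcat]; ring

lemma sum_range_catalanWeight (N : ℕ) :
    ∑ n ∈ range N, catalanWeight n = 1 - (N.centralBinom : ℝ) / 4 ^ N := by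
  induction N with
  | zero => simp
  | succ N ih =>
    have hcat : ((N : ℝ) + 1) * catalan N = N.centralBinom := by
      exact_mod_cast succ_mul_catalan_eq_centralBinom N
    rw [sum_range_succ, ih, centralBinom_succ_eq_catalan, ← hcat, catalanWeight]
    field_simp
    ring

lemma sum_range_catalanWeight_le_one (N : ℕ) : ∑ n ∈ range N, catalanWeight n ≤ 1 := by
  rw [sum_range_catalanWeight]
  linarith [show 0 ≤ (N.centralBinom : ℝ) / 4 ^ N by positivity]

lemma summable_catalanWeight : Summable catalanWeight :=
  summable_of_sum_range_le catalanWeight_nonneg sum_range_catalanWeight_le_one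

lemma tsum_catalanWeight_le_one : ∑' n, catalanWeight n ≤ 1 :=
  tsum_le_of_sum_range_le catalanWeight_nonneg sum_range_catalanWeight_le_one

lemma sum_range_catalanWeight_mul (n : ℕ) :
    ∑ k ∈ range (n + 1), catalanWeight k * catalanWeight (n - k) = 2 * catalanWeight (n + 1) := by
  have hterm : ∀ k ∈ range (n + 1), catalanWeight k * catalanWeight (n - k)
      = catalan k * catalan (n - k) / (4 * 4 ^ n) := by
    intro k hk
    obtain ⟨a, rfl⟩ := Nat.exists_eq_add_of_le (Nat.lt_succ_iff.mp (mem_range.mp hk))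
    rw [Nat.add_sub_cancel_left, pow_add, catalanWeight, catalanWeight]
    field_simp
    ring
  have hcat : ∑ k ∈ range (n + 1), (catalan k * catalan (n - k) : ℝ) = catalan (n + 1) := by
    rw [catalan_succ, ← Fin.sum_univ_eq_sum_range (fun k => (catalan k * catalan (n - k) : ℝ))]
    push_cast
    rfl
  rw [sum_congr rfl hterm, ← sum_div, hcat, catalanWeight, pow_succ]
  field_simp

lemma hasSum_catalanWeight_mul_pow {x : ℝ} (hx : |x| ≤ 1) :
    HasSum (fun n => catalanWeight n * x ^ (n + 1)) (1 - √(1 - x)) := by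
  set t : ℕ → ℝ := fun n => catalanWeight n * x ^ (n + 1) with ht
  have hnorm_le : ∀ n, ‖t n‖ ≤ catalanWeight n := fun n => by
    rw [ht, norm_mul, norm_pow, Real.norm_of_nonneg (catalanWeight_nonneg n)]
    exact mul_le_of_le_one_right (catalanWeight_nonneg n) (pow_le_one₀ (norm_nonneg x) hx)
  have hnorm : Summable fun n => ‖t n‖ :=
    summable_catalanWeight.of_nonneg_of_le (fun n => norm_nonneg _) hnorm_le
  set S := ∑' n, t n
  have hS_le : S ≤ 1 := calc
    S ≤ ‖S‖ := le_norm_self S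
    _ ≤ ∑' n, ‖t n‖ := norm_tsum_le_tsum_norm hnorm
    _ ≤ ∑' n, catalanWeight n := hnorm.tsum_le_tsum hnorm_le summable_catalanWeight
    _ ≤ 1 := tsum_catalanWeight_le_one
  have hconv : ∀ n, ∑ k ∈ range (n + 1), t k * t (n - k) = 2 * t (n + 1) := fun n => by
    have hterm : ∀ k ∈ range (n + 1), t k * t (n - k)
        = catalanWeight k * catalanWeight (n - k) * x ^ (n + 2) := by
      intro k hk
      obtain ⟨a, rfl⟩ := Nat.exists_eq_add_of_le (Nat.lt_succ_iff.mp (mem_range.mp hk))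
      rw [ht, Nat.add_sub_cancel_left]
      ring
    rw [sum_congr rfl hterm, ← sum_mul, sum_range_catalanWeight_mul]
    ring
  have hquad : S * S = 2 * S - x := calc
    S * S = ∑' n, ∑ k ∈ range (n + 1), t k * t (n - k) :=
      tsum_mul_tsum_eq_tsum_sum_range_of_summable_norm hnorm hnorm
    _ = ∑' n, 2 * t (n + 1) := tsum_congr hconv
    _ = 2 * S - x := by
      have hS : S = t 0 + ∑' n, t (n + 1) := hnorm.of_norm.tsum_eq_zero_add
      have ht0 : t 0 = x / 2 := by simp [ht, catalanWeight, div_eq_inv_mul]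
      rw [tsum_mul_left, hS, ht0]
      ring
  have hsqrt : √(1 - x) = 1 - S := by
    rw [show 1 - x = (1 - S) ^ 2 by linear_combination (-1 : ℝ) * hquad, Real.sqrt_sq (by linarith)]
  rw [hsqrt, sub_sub_cancel]
  exact hnorm.of_norm.hasSum

lemma Gamma_nat_add_half_eq_centralBinom (n : ℕ) :
    Gamma (n + 1 / 2) = √π * n.centralBinom * n ! / 4 ^ n := by
  induction n with
  | zero => simpa using Gamma_one_half_eq
  | succ n ih =>
    rw [Nat.cast_succ, add_right_comm, Gamma_add_one (by positivity), ih,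
      centralBinom_succ_eq_catalan, ← succ_mul_catalan_eq_centralBinom, Nat.factorial_succ]
    push_cast
    field_simp
    ring

lemma Gamma_div_eq_catalanWeight (n : ℕ) :
    Gamma ((n + 1 : ℝ) - 1 / 2) / ((n + 1)! * (2 * √π)) = catalanWeight n := by
  rw [add_sub_assoc, show (1 : ℝ) - 1 / 2 = 1 / 2 by norm_num, Gamma_nat_add_half_eq_centralBinom,
    ← succ_mul_catalan_eq_centralBinom, Nat.factorial_succ, catalanWeight]
  have : √π ≠ 0 := (Real.sqrt_pos.mpr pi_pos).ne'
  push_cast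
  field_simp

lemma integral_sum_smul_dirac {α : Type*} [MeasurableSpace α] {f : α → ℝ} (hf : Measurable f)
    (hf_nonneg : 0 ≤ f) {a : ℕ → α} {c : ℕ → ℝ} (hc : ∀ n, 0 ≤ c n) {s : ℝ}
    (hs : HasSum (fun n => c n * f (a n)) s) :
    ∫ y, f y ∂Measure.sum (fun n => ENNReal.ofReal (c n) • Measure.dirac (a n)) = s := by
  have hterm_nonneg : ∀ n, 0 ≤ c n * f (a n) := fun n => mul_nonneg (hc n) (hf_nonneg _)
  rw [integral_eq_lintegral_of_nonneg_ae (Filter.Eventually.of_forall hf_nonneg)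
    hf.aestronglyMeasurable, lintegral_sum_measure]
  simp_rw [lintegral_smul_measure, lintegral_dirac' _ hf.ennreal_ofReal, smul_eq_mul,
    ← ENNReal.ofReal_mul (hc _)]
  rw [← ENNReal.ofReal_tsum_of_nonneg hterm_nonneg hs.summable, hs.tsum_eq,
    ENNReal.toReal_ofReal (hs.nonneg hterm_nonneg)]

lemma mMeas_eq_sum_catalanWeight :
    mMeas = Measure.sum fun n : ℕ =>
      ENNReal.ofReal (catalanWeight n) • Measure.dirac ((n : ℝ) + 1) := by
  simp_rw [mMeas, Gamma_div_eq_catalanWeight]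

lemma integral_exp_mMeas {u : ℝ} (hu : 0 ≤ u) :
    ∫ lam, exp (-lam * u) ∂mMeas = 1 - √(1 - exp (-u)) := by
  have hx : |exp (-u)| ≤ 1 := by
    rw [abs_of_pos (exp_pos _), exp_le_one_iff]
    linarith
  rw [mMeas_eq_sum_catalanWeight]
  refine integral_sum_smul_dirac (by fun_prop) (fun _ => (exp_pos _).le) catalanWeight_nonneg ?_
  convert hasSum_catalanWeight_mul_pow hx using 3 with n
  rw [← exp_nat_mul]
  push_cast
  ring_nf

lemma integral_conv_of_map_add_eq_mul {M : Type*} [AddMonoid M] [MeasurableSpace M]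
    [MeasurableAdd₂ M] {μ ν : Measure M} [SFinite μ] [SFinite ν] {f : M → ℝ} (hf : Measurable f)
    (hf_add : ∀ a b, f (a + b) = f a * f b) :
    ∫ x, f x ∂(μ ∗ ν) = (∫ x, f x ∂μ) * ∫ x, f x ∂ν := by
  rw [Measure.conv, integral_map (by fun_prop) hf.aestronglyMeasurable]
  simp_rw [hf_add]
  exact integral_prod_mul f f

instance sFinite_mMeas : SFinite mMeas := by
  rw [mMeas]; infer_instance

instance sFinite_convPow (μ : Measure ℝ) [SFinite μ] (j : ℕ) : SFinite (convPow μ j) := by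
  induction j with
  | zero => rw [convPow]; infer_instance
  | succ j ih => rw [convPow]; infer_instance

lemma integral_convPow_of_map_add_eq_mul (μ : Measure ℝ) [SFinite μ] {f : ℝ → ℝ}
    (hf : Measurable f) (hf_zero : f 0 = 1) (hf_add : ∀ a b, f (a + b) = f a * f b) (j : ℕ) :
    ∫ x, f x ∂(convPow μ j) = (∫ x, f x ∂μ) ^ j := by
  induction j with
  | zero => rw [convPow, integral_dirac, hf_zero, pow_zero]
  | succ j ih => rw [convPow, integral_conv_of_map_add_eq_mul hf hf_add, ih, pow_succ]

theorem stmt17 (j k : ℕ) (u : ℝ) (hu : 0 < u) :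
    Real.exp (-(k : ℝ) * u / 2) * (1 - Real.sqrt (1 - Real.exp (-u))) ^ j
      = ∫ lam, Real.exp (-lam * u)
          ∂((Measure.dirac ((k : ℝ) / 2)).conv (convPow mMeas j)) := by
  have hexp_add (a b : ℝ) : exp (-(a + b) * u) = exp (-a * u) * exp (-b * u) := by
    rw [← exp_add]; ring_nf
  have hexp : Measurable fun lam : ℝ => exp (-lam * u) := by fun_prop
  rw [integral_conv_of_map_add_eq_mul hexp hexp_add, integral_dirac,
    integral_convPow_of_map_add_eq_mul mMeas hexp (by simp) hexp_add, integral_exp_mMeas hu.le]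
  ring_nf
end

section
/- Let V_p have Gamma distribution with density h_p(v) = (b^p/Γ(p)) v^{p−1} e^{−bv} for v > 0, where b > 0. Let g : (0,∞) → ℝ be measurable with g extendable by g(0) = 0 and g(v)/v bounded. Then lim_{p→0⁺} (1/p) E[g(V_p)] = ∫₀^∞ (g(v)/v) e^{−bv} dv. -/
/-!
For `p > 0`, `Γ(p + 1) = p Γ(p)` and `v ^ (p - 1) = v ^ p / v` turn `(1 / p) E[g(V_p)]` into
`b ^ p / Γ(p + 1) * ∫ (g v / v) v ^ p e^{-bv} dv`. The prefactor tends to `b ^ 0 / Γ(1) = 1`, and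
since `|g v / v| ≤ C` and `v ^ p ≤ 1 + v` for `p ∈ [0, 1]`, dominated convergence with the
integrable bound `C (1 + v) e^{-bv}` lets `v ^ p → 1` pass under the integral.
-/

open MeasureTheory Filter Set Topology

lemma Real.rpow_le_one_add_self {v p : ℝ} (hv : 0 ≤ v) (hp₀ : 0 ≤ p) (hp₁ : p ≤ 1) :
    v ^ p ≤ 1 + v := by
  rcases le_total v 1 with h | h
  · linarith [Real.rpow_le_one hv h hp₀]
  · calc v ^ p ≤ v ^ (1 : ℝ) := Real.rpow_le_rpow_of_exponent_le h hp₁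
      _ ≤ 1 + v := by rw [Real.rpow_one]; linarith

lemma integrableOn_one_add_mul_exp_neg_mul {b : ℝ} (hb : 0 < b) :
    IntegrableOn (fun v : ℝ => (1 + v) * Real.exp (-b * v)) (Ioi 0) := by
  have h₁ := integrableOn_rpow_mul_exp_neg_mul_rpow (s := 1) (p := 1) (by norm_num) one_pos hb
  simp only [Real.rpow_one] at h₁
  refine ((exp_neg_integrableOn_Ioi 0 hb).add h₁).congr_fun (fun v _ => ?_) measurableSet_Ioi
  simp only [Pi.add_apply]
  ring

theorem tendsto_setIntegral_mul_rpow_mul_exp_neg_mul {b M : ℝ} (hb : 0 < b) {f : ℝ → ℝ}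
    (hf : AEStronglyMeasurable f (volume.restrict (Ioi 0))) (hfM : ∀ v, 0 < v → |f v| ≤ M) :
    Tendsto (fun p : ℝ => ∫ v in Ioi 0, f v * v ^ p * Real.exp (-b * v)) (𝓝[>] 0)
      (𝓝 (∫ v in Ioi 0, f v * Real.exp (-b * v))) := by
  refine tendsto_integral_filter_of_dominated_convergence
    (fun v => M * ((1 + v) * Real.exp (-b * v))) ?_ ?_
    ((integrableOn_one_add_mul_exp_neg_mul hb).const_mul M) ?_
  · exact Eventually.of_forall fun p =>
      (hf.mul (by fun_prop : Measurable fun v : ℝ => v ^ p).aestronglyMeasurable).mul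
        (by fun_prop : Measurable fun v : ℝ => Real.exp (-b * v)).aestronglyMeasurable
  · filter_upwards [Ioo_mem_nhdsGT one_pos] with p hp
    filter_upwards [ae_restrict_mem measurableSet_Ioi] with v (hv : 0 < v)
    rw [norm_mul, norm_mul, Real.norm_eq_abs, Real.norm_of_nonneg (Real.rpow_nonneg hv.le p),
      Real.norm_of_nonneg (Real.exp_pos _).le, mul_assoc]
    exact mul_le_mul (hfM v hv)
      (by gcongr; exact Real.rpow_le_one_add_self hv.le hp.1.le hp.2.le)
      (by positivity) ((abs_nonneg _).trans (hfM v hv))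
  · filter_upwards [ae_restrict_mem measurableSet_Ioi] with v (hv : 0 < v)
    have hpow : Tendsto (fun p : ℝ => v ^ p) (𝓝[>] 0) (𝓝 1) := by
      simpa using ((Real.continuousAt_const_rpow (b := 0) hv.ne').continuousWithinAt
        (s := Ioi 0)).tendsto
    simpa using (hpow.const_mul (f v)).mul_const (Real.exp (-b * v))

lemma tendsto_rpow_div_Gamma_add_one {b : ℝ} (hb : 0 < b) :
    Tendsto (fun p : ℝ => b ^ p / Real.Gamma (p + 1)) (𝓝 0) (𝓝 1) := by
  have hΓ : ContinuousAt (fun p : ℝ => Real.Gamma (p + 1)) 0 := by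
    refine ContinuousAt.comp (g := Real.Gamma) ?_ (continuous_add_const 1).continuousAt
    refine (Real.differentiableAt_Gamma fun m h => ?_).continuousAt
    linarith [(m.cast_nonneg : (0 : ℝ) ≤ m)]
  simpa using ((Real.continuousAt_const_rpow hb.ne').div₀ hΓ (by simp)).tendsto

lemma one_div_mul_integral_mul_gamma_density {b p : ℝ} (hp : 0 < p) (g : ℝ → ℝ) :
    (1 / p) * ∫ v in Ioi 0, g v * (b ^ p / Real.Gamma p * v ^ (p - 1) * Real.exp (-b * v)) =
      b ^ p / Real.Gamma (p + 1) * ∫ v in Ioi 0, g v / v * v ^ p * Real.exp (-b * v) := by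
  rw [← integral_const_mul, ← integral_const_mul]
  refine setIntegral_congr_fun measurableSet_Ioi fun v (hv : 0 < v) => ?_
  have hΓ := (Real.Gamma_pos_of_pos hp).ne'
  rw [Real.Gamma_add_one hp.ne', Real.rpow_sub hv, Real.rpow_one]
  field_simp

theorem stmt18 (b : ℝ) (hb : 0 < b) (g : ℝ → ℝ) (hg : Measurable g)
    (C : ℝ) (hgC : ∀ v : ℝ, 0 < v → |g v| ≤ C * v) :
    Tendsto (fun p : ℝ =>
        (1 / p) * ∫ v in Set.Ioi (0:ℝ),
          g v * (b ^ p / Real.Gamma p * v ^ (p - 1) * Real.exp (-b * v)))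
      (nhdsWithin 0 (Set.Ioi 0))
      (nhds (∫ v in Set.Ioi (0:ℝ), (g v / v) * Real.exp (-b * v))) := by
  have hgv : ∀ v, 0 < v → |g v / v| ≤ C := fun v hv => by
    rw [abs_div, abs_of_pos hv, div_le_iff₀ hv]
    exact hgC v hv
  have hintegral := tendsto_setIntegral_mul_rpow_mul_exp_neg_mul hb (f := fun v => g v / v)
    (hg.div measurable_id).aestronglyMeasurable hgv
  have hpre := (tendsto_rpow_div_Gamma_add_one hb).mono_left (nhdsWithin_le_nhds (s := Ioi 0))
  have hlim := hpre.mul hintegral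
  simp only [one_mul] at hlim
  refine hlim.congr' ?_
  filter_upwards [self_mem_nhdsWithin] with p (hp : 0 < p)
  exact (one_div_mul_integral_mul_gamma_density hp g).symm
end
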